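/- Suppose m ≥ 2. There is no vector E = n·s + d·f − Σ_{i=1}^m r_i·e_i ∈ Λ_m satisfying all of: ⟨E, E⟩ = −1, ⟨E, K⟩ = −1, ⟨E, f⟩ ≥ 0, ⟨E, e_m⟩ ≥ 0, and ⟨E, σ⟩ ≥ 0 for every even simple root σ. (Equivalently: a class with E² = E·K = −1 and E·f ≥ 0 lying in the fundamental chamber must satisfy ⟨E, e_m⟩ < 0, i.e. must equal e_m; this is the key step in proving that any two blowdown structures of the same parity on a rational surface are connected by reflections in ineffective simple roots.) -/

import Mathlib

/-!
Write `E = n s + d f - ∑ rᵢ eᵢ`, so `n = ⟨E, f⟩`, `d = ⟨E, s⟩`, `rᵢ = ⟨E, eᵢ⟩`. The chamber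
conditions say `d ≥ n ≥ r₁ + r₂` and `r₁ ≥ r₂ ≥ ⋯ ≥ r_m ≥ 0`, while `E² = E·K = -1` say
`∑ rᵢ² = 2nd + 1` and `∑ rᵢ = 2n + 2d - 1`. Bounding `rᵢ² ≤ r₂ rᵢ` for `i ≥ 2` gives
`∑ rᵢ² ≤ r₁² - r₁ r₂ + r₂ (2n + 2d - 1)`, which is `< 2nd + 1` since `n - r₂, d - r₂ ≥ r₁`.
-/

/-- The basis vector `s` of the lattice `Λ_m = ℤ^{m+2}` (coordinate 0). -/
def sV (m : ℕ) : Fin (m + 2) → ℤ := fun i => if (i : ℕ) = 0 then 1 else 0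

/-- The basis vector `f` of the lattice `Λ_m = ℤ^{m+2}` (coordinate 1). -/
def fV (m : ℕ) : Fin (m + 2) → ℤ := fun i => if (i : ℕ) = 1 then 1 else 0

/-- The basis vector `e_j` (for `1 ≤ j ≤ m`) of the lattice `Λ_m = ℤ^{m+2}`
(coordinate `j+1`). -/
def eV (m j : ℕ) : Fin (m + 2) → ℤ := fun i => if (i : ℕ) = j + 1 then 1 else 0

/-- The even intersection form on `Λ_m`: `⟨s,s⟩ = 0`, `⟨s,f⟩ = 1`, `⟨f,f⟩ = 0`,
`⟨s,e_i⟩ = ⟨f,e_i⟩ = 0`, `⟨e_i,e_j⟩ = −δ_{ij}`. -/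
def evenForm (m : ℕ) (u v : Fin (m + 2) → ℤ) : ℤ :=
  u 0 * v 1 + u 1 * v 0 - ∑ i : Fin (m + 2), if 2 ≤ (i : ℕ) then u i * v i else 0

/-- The canonical class `K = −2s − 2f + Σ_{i=1}^m e_i` (even case). -/
def evenK (m : ℕ) : Fin (m + 2) → ℤ :=
  (-2 : ℤ) • sV m + (-2 : ℤ) • fV m + ∑ j ∈ Finset.Icc 1 m, eV m j

/-- The even simple roots: `σ_0 = s − f`, `σ_1 = f − e_1 − e_2`,
`σ_k = e_{k−1} − e_k` for `2 ≤ k ≤ m`. -/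
def evenRoot (m k : ℕ) : Fin (m + 2) → ℤ :=
  if k = 0 then sV m - fV m
  else if k = 1 then fV m - eV m 1 - eV m 2
  else eV m (k - 1) - eV m k

theorem Finset.sum_sq_le_mul_sum_of_le {ι R : Type*} [Semiring R] [PartialOrder R]
    [IsOrderedRing R] (s : Finset ι) {r : ι → R} {b : R}
    (h : ∀ i ∈ s, 0 ≤ r i ∧ r i ≤ b) :
    ∑ i ∈ s, r i ^ 2 ≤ b * ∑ i ∈ s, r i := by
  rw [Finset.mul_sum]
  refine Finset.sum_le_sum fun i hi => ?_
  rw [sq]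
  exact mul_le_mul_of_nonneg_right (h i hi).2 (h i hi).1

theorem sum_sq_lt_of_antitone {k : ℕ} {r : Fin (k + 2) → ℤ} {n d : ℤ} (hr : Antitone r)
    (hlast : 0 ≤ r (Fin.last _)) (hnd : n ≤ d) (hn : r 0 + r 1 ≤ n)
    (hsum : ∑ i, r i = 2 * (n + d) - 1) :
    ∑ i, r i ^ 2 < 2 * n * d + 1 := by
  have hpos : ∀ i, 0 ≤ r i := fun i => hlast.trans (hr (Fin.le_last i))
  have htail : ∑ i : Fin (k + 1), r i.succ ^ 2 ≤ r 1 * ∑ i : Fin (k + 1), r i.succ :=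
    Finset.univ.sum_sq_le_mul_sum_of_le fun i _ =>
      ⟨hpos _, hr (Fin.succ_le_succ_iff.2 (Fin.zero_le i))⟩
  rw [Fin.sum_univ_succ] at hsum ⊢
  -- With a = r 0, b = r 1, the gap 2nd + 1 - (a² - ab + b(2n + 2d - 1)) equals
  -- 2(n-a-b)(d-b) + 2a(d-a-b) + (a-b)(a+2b) + b + 1.
  nlinarith [mul_nonneg (by linarith : 0 ≤ n - r 0 - r 1) (by linarith [hpos 0] : 0 ≤ d - r 1),
    mul_nonneg (hpos 0) (by linarith : 0 ≤ d - r 0 - r 1),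
    mul_nonneg (by linarith [hr (Fin.zero_le (1 : Fin (k + 2)))] : 0 ≤ r 0 - r 1)
      (by linarith [hpos 0, hpos 1] : 0 ≤ r 0 + 2 * r 1), hpos 1]

section Coordinates

variable {m : ℕ} (u : Fin (m + 2) → ℤ)

theorem evenForm_eq_sum (v : Fin (m + 2) → ℤ) :
    evenForm m u v = u 0 * v 1 + u 1 * v 0 - ∑ i : Fin m, u i.succ.succ * v i.succ.succ := by
  simp [evenForm, Fin.sum_univ_succ, Fin.val_succ]

theorem evenForm_sub_right (v w : Fin (m + 2) → ℤ) :
    evenForm m u (v - w) = evenForm m u v - evenForm m u w := by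
  simp only [evenForm_eq_sum, Pi.sub_apply, mul_sub, Finset.sum_sub_distrib]
  ring

theorem evenForm_fV : evenForm m u (fV m) = u 0 := by
  simp [evenForm_eq_sum, fV, Fin.val_succ]

theorem evenForm_sV : evenForm m u (sV m) = u 1 := by
  simp [evenForm_eq_sum, sV, Fin.val_succ]

theorem evenForm_eV_succ (j : Fin m) : evenForm m u (eV m (j + 1)) = -u j.succ.succ := by
  simp [evenForm_eq_sum, eV, Fin.val_succ, Fin.val_inj]

theorem evenK_succ_succ (i : Fin m) : evenK m i.succ.succ = 1 := by
  simp [evenK, Finset.sum_apply, sV, fV, eV, Fin.val_succ]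

theorem evenForm_self :
    evenForm m u u = 2 * evenForm m u (fV m) * evenForm m u (sV m)
      - ∑ j : Fin m, evenForm m u (eV m (j + 1)) ^ 2 := by
  simp only [evenForm_fV, evenForm_sV, evenForm_eV_succ, neg_mul_neg, sq]
  rw [evenForm_eq_sum]
  ring

theorem evenForm_evenK :
    evenForm m u (evenK m) = -2 * evenForm m u (fV m) - 2 * evenForm m u (sV m)
      + ∑ j : Fin m, evenForm m u (eV m (j + 1)) := by
  simp only [evenForm_fV, evenForm_sV, evenForm_eV_succ, Finset.sum_neg_distrib]
  rw [evenForm_eq_sum]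
  simp [evenK, sV, fV, eV, Finset.sum_apply]
  ring

end Coordinates

theorem evenRoot_zero (m : ℕ) : evenRoot m 0 = sV m - fV m := rfl

theorem evenRoot_one (m : ℕ) : evenRoot m 1 = fV m - eV m 1 - eV m 2 := rfl

theorem evenRoot_add_two (m k : ℕ) : evenRoot m (k + 2) = eV m (k + 1) - eV m (k + 2) := by
  simp [evenRoot]

/-- For `m ≥ 2`, there is no vector `E ∈ Λ_m` satisfying all of: `⟨E, E⟩ = −1`,
`⟨E, K⟩ = −1`, `⟨E, f⟩ ≥ 0`, `⟨E, e_m⟩ ≥ 0`, and `⟨E, σ⟩ ≥ 0` for every even simple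
root `σ`.  (A class with `E² = E·K = −1` and `E·f ≥ 0` lying in the fundamental chamber
must equal `e_m`.) -/
theorem no_neg_one_class_in_fundamental_chamber (m : ℕ) (hm : 2 ≤ m) :
    ¬ ∃ E : Fin (m + 2) → ℤ,
        evenForm m E E = -1 ∧
        evenForm m E (evenK m) = -1 ∧
        0 ≤ evenForm m E (fV m) ∧
        0 ≤ evenForm m E (eV m m) ∧
        (∀ k, k ≤ m → 0 ≤ evenForm m E (evenRoot m k)) := by
  rintro ⟨E, hEE, hEK, -, hlast, hroots⟩
  obtain ⟨k, rfl⟩ : ∃ k, m = k + 2 := ⟨m - 2, by omega⟩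
  set r : Fin (k + 2) → ℤ := fun j => evenForm _ E (eV _ (j + 1))
  have hanti : Antitone r := Fin.antitone_iff_succ_le.2 fun i => by
    have := hroots (i + 2) (by omega)
    rw [evenRoot_add_two, evenForm_sub_right] at this
    simpa [r, sub_nonneg] using this
  have hnd := hroots 0 (by omega)
  rw [evenRoot_zero, evenForm_sub_right, sub_nonneg] at hnd
  have hn : r 0 + r 1 ≤ evenForm _ E (fV _) := by
    have := hroots 1 (by omega)
    rw [evenRoot_one, evenForm_sub_right, evenForm_sub_right] at this
    simp only [r, Fin.val_zero, Fin.val_one]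
    linarith
  have hsum : ∑ i, r i = 2 * (evenForm _ E (fV _) + evenForm _ E (sV _)) - 1 := by
    rw [evenForm_evenK] at hEK
    linarith
  have hlt := sum_sq_lt_of_antitone hanti hlast hnd hn hsum
  rw [evenForm_self] at hEE
  linarith
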